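/- arXiv:1805.10218 — 2 statements merged into one kernel-verified Lean document; each statement's English description precedes it below -/
import Mathlib

section
/- Let ŵ ∈ S_N, regarded as a bijection {1,…,N} → {1,…,n₁}×{1,…,n₂}. Suppose there are k ∈ {1,…,N−1}, i ∈ {1,…,n₁−1}, j ∈ {1,…,n₂} with ŵ(k) = (i,j) and ŵ(k+1) = (i+1,j). Let v = ((i i+1), 1) ∈ W and let v̂ ∈ S_N be determined by v̂⁻¹ = ŵ·(k k+1)·ŵ₀. Then ((v̂ŵ)^∨)⁻¹ = (k k+1), the set ŵ·Φ̂(((v̂ŵ)^∨)⁻¹) equals the singleton {ε̂_{(i+1,j)} − ε̂_{(i,j)}}, the set Φ(v⁻¹) equals the singleton {ε_{i+1} − ε_i}, and ρ restricts to a bijection from ŵ·Φ̂(((v̂ŵ)^∨)⁻¹) onto Φ(v⁻¹). (This is the dominance criterion verified for the vertical length-one configuration of the paper.) -/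
open Equiv

/-- The weight lattice `L = ℤ^{n₁} × ℤ^{n₂}` of `GL(n₁) × GL(n₂)`. -/
abbrev L (n₁ n₂ : ℕ) : Type := (Fin n₁ → ℤ) × (Fin n₂ → ℤ)

/-- The weight lattice `L̂ = ℤ^N` of `GL(N)`. -/
abbrev Lhat (N : ℕ) : Type := Fin N → ℤ

/-- The standard basis vector `ε_a` of the first factor of `L`. -/
def eps {n₁ n₂ : ℕ} (a : Fin n₁) : L n₁ n₂ := (Pi.single a 1, 0)

/-- The standard basis vector `η_c` of the second factor of `L`. -/
def eta {n₁ n₂ : ℕ} (c : Fin n₂) : L n₁ n₂ := (0, Pi.single c 1)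

/-- The standard basis vector `ε̂_p` of `L̂`. -/
def epsHat {N : ℕ} (p : Fin N) : Lhat N := Pi.single p 1

/-- The lexicographic identification of `{1,…,n₁} × {1,…,n₂}` with `{1,…,n₁n₂}`,
`(i,j) ↦ (i-1)n₂ + j` in 1-based terms. -/
def lex {n₁ n₂ : ℕ} (i : Fin n₁) (j : Fin n₂) : Fin (n₁ * n₂) :=
  finProdFinEquiv (i, j)

/-- The action of `W = S_{n₁} × S_{n₂}` on `L`, characterised by
`u • ε_a = ε_{u₁ a}` and `u • η_c = η_{u₂ c}`. -/
def wAct {n₁ n₂ : ℕ} (u : Perm (Fin n₁) × Perm (Fin n₂)) (x : L n₁ n₂) : L n₁ n₂ :=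
  (x.1 ∘ u.1.symm, x.2 ∘ u.2.symm)

/-- The action of `Ŵ = S_N` on `L̂`, characterised by `û • ε̂_p = ε̂_{û p}`. -/
def hatAct {N : ℕ} (u : Perm (Fin N)) (x : Lhat N) : Lhat N := x ∘ u.symm

/-- The positive roots `Φ⁺` of `GL(n₁) × GL(n₂)`. -/
def PhiPos (n₁ n₂ : ℕ) : Set (L n₁ n₂) :=
  {x | ∃ a b : Fin n₁, a < b ∧ x = eps a - eps b} ∪
    {x | ∃ c d : Fin n₂, c < d ∧ x = eta c - eta d}

/-- The negative roots `Φ⁻ = -Φ⁺`. -/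
def PhiNeg (n₁ n₂ : ℕ) : Set (L n₁ n₂) := Neg.neg '' PhiPos n₁ n₂

/-- The inversion set `Φ(u) = Φ⁻ ∩ u · Φ⁺`. -/
def Phi {n₁ n₂ : ℕ} (u : Perm (Fin n₁) × Perm (Fin n₂)) : Set (L n₁ n₂) :=
  PhiNeg n₁ n₂ ∩ wAct u '' PhiPos n₁ n₂

/-- The positive roots `Φ̂⁺` of `GL(N)`. -/
def PhiHatPos (N : ℕ) : Set (Lhat N) :=
  {x | ∃ p q : Fin N, p < q ∧ x = epsHat p - epsHat q}

/-- The negative roots `Φ̂⁻ = -Φ̂⁺`. -/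
def PhiHatNeg (N : ℕ) : Set (Lhat N) := Neg.neg '' PhiHatPos N

/-- The inversion set `Φ̂(û) = Φ̂⁻ ∩ û · Φ̂⁺`. -/
def PhiHat {N : ℕ} (u : Perm (Fin N)) : Set (Lhat N) :=
  PhiHatNeg N ∩ hatAct u '' PhiHatPos N

/-- The longest element `ŵ₀ : k ↦ N + 1 - k` of `S_N`. -/
def w0 (N : ℕ) : Perm (Fin N) := Fin.revPerm

/-- The 3-cycle `(a b c)` sending `a ↦ b ↦ c ↦ a` (permutations composed right-to-left). -/
def cyc {α : Type*} [DecidableEq α] (a b c : α) : Perm α :=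
  Equiv.swap a b * Equiv.swap b c


section Aux

variable {n₁ n₂ N : ℕ}

lemma hatAct_epsHat (u : Perm (Fin N)) (p : Fin N) :
    hatAct u (epsHat p) = epsHat (u p) := by
  funext x
  simp [hatAct, epsHat, Pi.single_apply, Equiv.symm_apply_eq]

lemma hatAct_sub (u : Perm (Fin N)) (x y : Lhat N) :
    hatAct u (x - y) = hatAct u x - hatAct u y := rfl

lemma wAct_sub (u : Perm (Fin n₁) × Perm (Fin n₂)) (x y : L n₁ n₂) :
    wAct u (x - y) = wAct u x - wAct u y := rfl

lemma wAct_eps (u : Perm (Fin n₁) × Perm (Fin n₂)) (a : Fin n₁) :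
    wAct u (eps a) = (eps (u.1 a) : L n₁ n₂) := by
  refine Prod.ext ?_ rfl
  funext x
  simp [wAct, eps, Pi.single_apply, Equiv.symm_apply_eq]

lemma wAct_eta (u : Perm (Fin n₁) × Perm (Fin n₂)) (c : Fin n₂) :
    wAct u (eta c) = (eta (u.2 c) : L n₁ n₂) := by
  refine Prod.ext rfl ?_
  funext x
  simp [wAct, eta, Pi.single_apply, Equiv.symm_apply_eq]

lemma w0_sq (N : ℕ) : w0 N * w0 N = 1 := by
  ext x; simp [w0]

lemma w0_inv (N : ℕ) : (w0 N)⁻¹ = w0 N := by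
  ext x; simp [w0, Equiv.Perm.inv_def]

lemma single_sub_inj {n : ℕ} {a b c d : Fin n} (hab : a ≠ b)
    (h : (Pi.single a 1 - Pi.single b 1 : Fin n → ℤ) = Pi.single c 1 - Pi.single d 1) :
    a = c ∧ b = d := by
  have h1 := congrFun h a
  have h2 := congrFun h b
  simp only [Pi.sub_apply, Pi.single_apply] at h1 h2
  split_ifs at h1 h2 <;> simp_all

lemma single_sub_ne_zero {n : ℕ} {a b : Fin n} (hab : a ≠ b) :
    (Pi.single a 1 - Pi.single b 1 : Fin n → ℤ) ≠ 0 := by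
  intro h
  have h1 := congrFun h a
  simp [Pi.single_apply, hab, hab.symm] at h1

lemma swap_adj {k k' : Fin N} (hk' : (k' : ℕ) = (k : ℕ) + 1) {p q : Fin N} (hpq : p < q)
    (h : Equiv.swap k k' q < Equiv.swap k k' p) : p = k ∧ q = k' := by
  have hval : ∀ a b : Fin N, a ≠ b ↔ (a : ℕ) ≠ (b : ℕ) := fun a b => Fin.ne_iff_vne a b
  rw [Fin.lt_def] at hpq
  rcases eq_or_ne p k with hpk | hpk
  · rcases eq_or_ne q k' with hqk' | hqk'
    · exact ⟨hpk, hqk'⟩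
    · exfalso
      have hqk : q ≠ k := by rw [hval]; rw [Fin.ext_iff] at hpk; omega
      rw [hpk, swap_apply_left, swap_apply_of_ne_of_ne hqk hqk', Fin.lt_def] at h
      rw [hval] at hqk'
      rw [Fin.ext_iff] at hpk
      omega
  · exfalso
    rcases eq_or_ne p k' with hpk' | hpk'
    · have h1 : (p : ℕ) = (k : ℕ) + 1 := by rw [Fin.ext_iff] at hpk'; omega
      have hqk : q ≠ k := by rw [hval]; omega
      have hqk' : q ≠ k' := by rw [hval]; omega
      rw [hpk', swap_apply_right, swap_apply_of_ne_of_ne hqk hqk', Fin.lt_def] at h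
      omega
    · rw [swap_apply_of_ne_of_ne hpk hpk'] at h
      rw [hval] at hpk hpk'
      rcases eq_or_ne q k with hqk | hqk
      · rw [hqk, swap_apply_left, Fin.lt_def] at h
        rw [Fin.ext_iff] at hqk; omega
      · rcases eq_or_ne q k' with hqk' | hqk'
        · rw [hqk', swap_apply_right, Fin.lt_def] at h
          rw [Fin.ext_iff] at hqk'; omega
        · rw [swap_apply_of_ne_of_ne hqk hqk', Fin.lt_def] at h
          omega

lemma phiHat_swap {k k' : Fin N} (hk' : (k' : ℕ) = (k : ℕ) + 1) :
    PhiHat (Equiv.swap k k') = {epsHat k' - epsHat k} := by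
  have hkk' : k < k' := by rw [Fin.lt_def]; omega
  ext x
  simp only [Set.mem_singleton_iff]
  constructor
  · rintro ⟨⟨y, ⟨p, q, hpq, rfl⟩, rfl⟩, ⟨z, ⟨a, b, hab, rfl⟩, hz⟩⟩
    rw [hatAct_sub, hatAct_epsHat, hatAct_epsHat] at hz
    have hne : Equiv.swap k k' a ≠ Equiv.swap k k' b :=
      fun h => hab.ne ((Equiv.swap k k').injective h)
    have h2 : (Pi.single (Equiv.swap k k' a) 1 - Pi.single (Equiv.swap k k' b) 1 :
        Lhat N) = Pi.single q 1 - Pi.single p 1 := by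
      have : (epsHat (Equiv.swap k k' a) - epsHat (Equiv.swap k k' b) : Lhat N)
          = epsHat q - epsHat p := by rw [hz, neg_sub]
      exact this
    obtain ⟨e1, e2⟩ := single_sub_inj hne h2
    have hlt : Equiv.swap k k' b < Equiv.swap k k' a := by rw [e1, e2]; exact hpq
    obtain ⟨ha, hb⟩ := swap_adj hk' hab hlt
    have hp : p = k := by rw [← e2, hb, swap_apply_right]
    have hq : q = k' := by rw [← e1, ha, swap_apply_left]
    rw [hp, hq, neg_sub]
  · rintro rfl
    refine ⟨⟨epsHat k - epsHat k', ⟨k, k', hkk', rfl⟩, by rw [neg_sub]⟩,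
            ⟨epsHat k - epsHat k', ⟨k, k', hkk', rfl⟩, ?_⟩⟩
    rw [hatAct_sub, hatAct_epsHat, hatAct_epsHat, swap_apply_left, swap_apply_right]

lemma eps_pair_inj {a b c d : Fin n₁} (hab : a ≠ b)
    (h : (eps a - eps b : L n₁ n₂) = eps c - eps d) : a = c ∧ b = d :=
  single_sub_inj hab (congrArg Prod.fst h)

lemma eta_pair_inj {a b c d : Fin n₂} (hab : a ≠ b)
    (h : (eta a - eta b : L n₁ n₂) = eta c - eta d) : a = c ∧ b = d :=
  single_sub_inj hab (congrArg Prod.snd h)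

lemma eps_ne_eta {a b : Fin n₁} {c d : Fin n₂} (hab : a ≠ b) :
    (eps a - eps b : L n₁ n₂) ≠ eta c - eta d := by
  intro h
  have h1 : (Pi.single a 1 - Pi.single b 1 : Fin n₁ → ℤ) = 0 - 0 := congrArg Prod.fst h
  rw [sub_zero] at h1
  exact single_sub_ne_zero hab h1

lemma phi_swap {i i' : Fin n₁} (hi' : (i' : ℕ) = (i : ℕ) + 1) :
    Phi (n₁ := n₁) (n₂ := n₂) (Equiv.swap i i', 1) = {eps i' - eps i} := by
  have hii' : i < i' := by rw [Fin.lt_def]; omega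
  ext x
  simp only [Set.mem_singleton_iff]
  constructor
  · rintro ⟨⟨y, hy, rfl⟩, ⟨z, hz, hzx⟩⟩
    rcases hy with ⟨a, b, hab, rfl⟩ | ⟨c, d, hcd, rfl⟩ <;>
      rcases hz with ⟨a', b', hab', rfl⟩ | ⟨c', d', hcd', rfl⟩
    · rw [wAct_sub, wAct_eps, wAct_eps] at hzx
      have hne : Equiv.swap i i' a' ≠ Equiv.swap i i' b' :=
        fun h => hab'.ne ((Equiv.swap i i').injective h)
      have h2 : (eps (Equiv.swap i i' a') - eps (Equiv.swap i i' b') : L n₁ n₂)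
          = eps b - eps a := by rw [hzx, neg_sub]
      obtain ⟨e1, e2⟩ := eps_pair_inj hne h2
      have hlt : Equiv.swap i i' b' < Equiv.swap i i' a' := by rw [e1, e2]; exact hab
      obtain ⟨ha, hb⟩ := swap_adj hi' hab' hlt
      have hA : a = i := by rw [← e2, hb, swap_apply_right]
      have hB : b = i' := by rw [← e1, ha, swap_apply_left]
      rw [hA, hB, neg_sub]
    · exfalso
      rw [wAct_sub, wAct_eta, wAct_eta] at hzx
      have h2 := hzx
      rw [neg_sub] at h2
      exact eps_ne_eta hab.ne.symm h2.symm
    · exfalso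
      rw [wAct_sub, wAct_eps, wAct_eps] at hzx
      have hne : Equiv.swap i i' a' ≠ Equiv.swap i i' b' :=
        fun h => hab'.ne ((Equiv.swap i i').injective h)
      have h2 : (eps (Equiv.swap i i' a') - eps (Equiv.swap i i' b') : L n₁ n₂)
          = eta d - eta c := by rw [hzx, neg_sub]
      exact eps_ne_eta hne h2
    · exfalso
      rw [wAct_sub, wAct_eta, wAct_eta] at hzx
      have h2 : (eta ((1 : Perm (Fin n₂)) c') - eta ((1 : Perm (Fin n₂)) d') : L n₁ n₂)
          = eta d - eta c := by rw [hzx, neg_sub]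
      simp only [Perm.one_apply] at h2
      obtain ⟨e1, e2⟩ := eta_pair_inj hcd'.ne h2
      rw [Fin.lt_def] at hcd hcd'
      rw [Fin.ext_iff] at e1 e2
      omega
  · rintro rfl
    refine ⟨⟨eps i - eps i', Or.inl ⟨i, i', hii', rfl⟩, by rw [neg_sub]⟩,
            ⟨eps i - eps i', Or.inl ⟨i, i', hii', rfl⟩, ?_⟩⟩
    rw [wAct_sub, wAct_eps, wAct_eps]
    show (eps (Equiv.swap i i' i) - eps (Equiv.swap i i' i') : L n₁ n₂) = _
    rw [swap_apply_left, swap_apply_right]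

end Aux

/-- the dominance criterion for the vertical length-one configuration:
if `ŵ(k) = (i,j)` and `ŵ(k+1) = (i+1,j)`, `v = ((i i+1), 1)` and `v̂⁻¹ = ŵ (k k+1) ŵ₀`,
then `((v̂ŵ)^∨)⁻¹ = (k k+1)`, `ŵ·Φ̂(((v̂ŵ)^∨)⁻¹) = {ε̂_{(i+1,j)} - ε̂_{(i,j)}}`,
`Φ(v⁻¹) = {ε_{i+1} - ε_i}`, and `ρ` restricts to a bijection between these two sets. -/
theorem vertical_length_one (n₁ n₂ : ℕ) (hn₁ : 0 < n₁) (hn₂ : 0 < n₂)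
    (ρ : Lhat (n₁ * n₂) →ₗ[ℤ] L n₁ n₂)
    (hρ : ∀ (i : Fin n₁) (j : Fin n₂), ρ (epsHat (lex i j)) = eps i + eta j)
    (wh : Perm (Fin (n₁ * n₂)))
    (k k' : Fin (n₁ * n₂)) (hk' : (k' : ℕ) = (k : ℕ) + 1)
    (i i' : Fin n₁) (hi' : (i' : ℕ) = (i : ℕ) + 1) (j : Fin n₂)
    (hwk : wh k = lex i j) (hwk' : wh k' = lex i' j)
    (v : Perm (Fin n₁) × Perm (Fin n₂)) (hv : v = (Equiv.swap i i', 1))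
    (vh : Perm (Fin (n₁ * n₂))) (hvh : vh⁻¹ = wh * Equiv.swap k k' * w0 (n₁ * n₂)) :
    (w0 (n₁ * n₂) * (vh * wh))⁻¹ = Equiv.swap k k' ∧
    hatAct wh '' PhiHat ((w0 (n₁ * n₂) * (vh * wh))⁻¹) =
      {epsHat (lex i' j) - epsHat (lex i j)} ∧
    Phi v⁻¹ = {(eps i' - eps i : L n₁ n₂)} ∧
    Set.BijOn (⇑ρ) (hatAct wh '' PhiHat ((w0 (n₁ * n₂) * (vh * wh))⁻¹)) (Phi v⁻¹) := by
  have h1 : (w0 (n₁ * n₂) * (vh * wh))⁻¹ = Equiv.swap k k' := by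
    have hvh2 : vh = w0 (n₁ * n₂) * Equiv.swap k k' * wh⁻¹ := by
      have h := congrArg Inv.inv hvh
      rw [inv_inv, mul_inv_rev, mul_inv_rev, w0_inv, swap_inv, ← mul_assoc] at h
      exact h
    have key : w0 (n₁ * n₂) * (w0 (n₁ * n₂) * Equiv.swap k k' * wh⁻¹ * wh) = Equiv.swap k k' := by
      rw [mul_assoc (w0 (n₁ * n₂) * Equiv.swap k k') wh⁻¹ wh, inv_mul_cancel, mul_one,
        ← mul_assoc, w0_sq, one_mul]
    rw [hvh2, key, swap_inv]
  have hkne : k ≠ k' := by rw [Fin.ne_iff_vne]; omega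
  have h2 : hatAct wh '' PhiHat ((w0 (n₁ * n₂) * (vh * wh))⁻¹) =
      {epsHat (lex i' j) - epsHat (lex i j)} := by
    rw [h1, phiHat_swap hk', Set.image_singleton, hatAct_sub, hatAct_epsHat, hatAct_epsHat,
      hwk, hwk']
  have hvinv : v⁻¹ = ((Equiv.swap i i', 1) : Perm (Fin n₁) × Perm (Fin n₂)) := by
    rw [hv, Prod.inv_mk, swap_inv, inv_one]
  have h3 : Phi v⁻¹ = {(eps i' - eps i : L n₁ n₂)} := by
    rw [hvinv, phi_swap hi']
  refine ⟨h1, h2, h3, ?_⟩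
  rw [h2, h3, Set.bijOn_singleton, map_sub, hρ, hρ]
  abel
end

section
/- (Configuration B.) Let ŵ ∈ S_N, regarded as a bijection {1,…,N} → {1,…,n₁}×{1,…,n₂}. Suppose there are k, k' ∈ {1,…,N−1} with |k−k'| ≥ 2, i, i' ∈ {1,…,n₁−1} with |i−i'| ≥ 2, and j, j' ∈ {1,…,n₂} such that ŵ(k) = (i,j), ŵ(k+1) = (i+1,j), ŵ(k') = (i',j'), ŵ(k'+1) = (i'+1,j'). Let v ∈ W be determined by v⁻¹ = ((i i+1)(i' i'+1), 1) and let v̂ ∈ S_N be determined by v̂⁻¹ = ŵ·(k k+1)·(k' k'+1)·ŵ₀. Then ŵ·Φ̂(((v̂ŵ)^∨)⁻¹) = {ε̂_{(i+1,j)} − ε̂_{(i,j)}, ε̂_{(i'+1,j')} − ε̂_{(i',j')}}, Φ(v⁻¹) = {ε_{i+1} − ε_i, ε_{i'+1} − ε_{i'}}, and ρ restricts to a bijection from ŵ·Φ̂(((v̂ŵ)^∨)⁻¹) onto Φ(v⁻¹). -/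
open Equiv

section Aux
open Equiv

lemma epsHat_sub_inj {N : ℕ} {p q r s : Fin N} (hpq : p ≠ q) (hrs : r ≠ s)
    (h : epsHat p - epsHat q = epsHat r - epsHat s) : p = r ∧ q = s := by
  have h1 := congrFun h p
  have h2 := congrFun h q
  simp only [Pi.sub_apply, epsHat, Pi.single_apply, if_true, if_neg hpq,
    if_neg (Ne.symm hpq)] at h1 h2
  split_ifs at h1 h2 <;> omega

lemma doubleSwap_apply {α : Type*} [DecidableEq α] {k k₁ l l₁ : α}
    (h1 : k ≠ l) (h2 : k ≠ l₁) (h3 : k₁ ≠ l) (h4 : k₁ ≠ l₁) (x : α) :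
    (Equiv.swap k k₁ * Equiv.swap l l₁) x =
      if x = k then k₁ else if x = k₁ then k else if x = l then l₁ else
        if x = l₁ then l else x := by
  simp only [Perm.mul_apply]
  split_ifs with e1 e2 e3 e4 <;>
    simp_all [Equiv.swap_apply_of_ne_of_ne, Equiv.swap_apply_def] <;>
    simp [Ne.symm h1, Ne.symm h2, Ne.symm h3, Ne.symm h4]

lemma hatAct_epsHat_sub {N : ℕ} (u : Perm (Fin N)) (p q : Fin N) :
    hatAct u (epsHat p - epsHat q) = epsHat (u p) - epsHat (u q) := by
  funext x
  simp [hatAct, epsHat, Pi.single_apply, Equiv.symm_apply_eq]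

lemma PhiHat_doubleSwap {N : ℕ} {k k₁ l l₁ : Fin N}
    (hk₁ : (k₁ : ℕ) = (k : ℕ) + 1) (hl₁ : (l₁ : ℕ) = (l : ℕ) + 1)
    (hsep : (k : ℕ) + 2 ≤ (l : ℕ) ∨ (l : ℕ) + 2 ≤ (k : ℕ)) :
    PhiHat (Equiv.swap k k₁ * Equiv.swap l l₁) =
      {epsHat k₁ - epsHat k, epsHat l₁ - epsHat l} := by
  have ne1 : k ≠ l := Fin.ne_of_val_ne (by omega)
  have ne2 : k ≠ l₁ := Fin.ne_of_val_ne (by omega)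
  have ne3 : k₁ ≠ l := Fin.ne_of_val_ne (by omega)
  have ne4 : k₁ ≠ l₁ := Fin.ne_of_val_ne (by omega)
  have ne5 : k ≠ k₁ := Fin.ne_of_val_ne (by omega)
  have ne6 : l ≠ l₁ := Fin.ne_of_val_ne (by omega)
  have hu := doubleSwap_apply ne1 ne2 ne3 ne4
  have huk : (Equiv.swap k k₁ * Equiv.swap l l₁) k = k₁ := by rw [hu]; simp
  have huk₁ : (Equiv.swap k k₁ * Equiv.swap l l₁) k₁ = k := by
    rw [hu]; simp [Ne.symm ne5]
  have hul : (Equiv.swap k k₁ * Equiv.swap l l₁) l = l₁ := by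
    rw [hu]; simp [Ne.symm ne1, Ne.symm ne3]
  have hul₁ : (Equiv.swap k k₁ * Equiv.swap l l₁) l₁ = l := by
    rw [hu]; simp [Ne.symm ne2, Ne.symm ne4, Ne.symm ne6]
  ext x
  constructor
  · rintro ⟨⟨y, ⟨p, q, hpq, rfl⟩, rfl⟩, z, ⟨p', q', hpq', rfl⟩, hz⟩
    rw [hatAct_epsHat_sub, neg_sub] at hz
    have hne' : (Equiv.swap k k₁ * Equiv.swap l l₁) p' ≠ (Equiv.swap k k₁ * Equiv.swap l l₁) q' :=
      fun e => hpq'.ne (by exact ((Equiv.swap k k₁ * Equiv.swap l l₁).injective e))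
    obtain ⟨h1, h2⟩ := epsHat_sub_inj hne' hpq.ne' hz
    have hP : (p' = k ∧ q' = k₁) ∨ (p' = l ∧ q' = l₁) := by
      rw [hu p'] at h1
      rw [hu q'] at h2
      have hlt : (p' : ℕ) < q' := hpq'
      have hlt2 : (p : ℕ) < q := hpq
      split_ifs at h1 h2 <;> omega
    rcases hP with ⟨rfl, rfl⟩ | ⟨rfl, rfl⟩
    · rw [huk] at h1
      rw [huk₁] at h2
      rw [← h1, ← h2, neg_sub]
      exact Or.inl rfl
    · rw [hul] at h1
      rw [hul₁] at h2
      rw [← h1, ← h2, neg_sub]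
      exact Or.inr rfl
  · rintro (rfl | rfl)
    · exact ⟨⟨epsHat k - epsHat k₁, ⟨k, k₁, by omega, rfl⟩, by rw [neg_sub]⟩,
        epsHat k - epsHat k₁, ⟨k, k₁, by omega, rfl⟩,
        by rw [hatAct_epsHat_sub, huk, huk₁]⟩
    · exact ⟨⟨epsHat l - epsHat l₁, ⟨l, l₁, by omega, rfl⟩, by rw [neg_sub]⟩,
        epsHat l - epsHat l₁, ⟨l, l₁, by omega, rfl⟩,
        by rw [hatAct_epsHat_sub, hul, hul₁]⟩

end Aux

section Aux2
open Equiv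

lemma wAct_eps_sub {n₁ n₂ : ℕ} (u : Perm (Fin n₁) × Perm (Fin n₂)) (a b : Fin n₁) :
    wAct u (eps a - eps b : L n₁ n₂) = eps (u.1 a) - eps (u.1 b) := by
  refine Prod.ext ?_ ?_
  · funext x
    simp [wAct, eps, Pi.single_apply, Equiv.symm_apply_eq]
  · funext x
    simp [wAct, eps]

lemma wAct_eta_sub {n₁ n₂ : ℕ} (u : Perm (Fin n₁) × Perm (Fin n₂)) (c d : Fin n₂) :
    wAct u (eta c - eta d : L n₁ n₂) = eta (u.2 c) - eta (u.2 d) := by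
  refine Prod.ext ?_ ?_
  · funext x
    simp [wAct, eta]
  · funext x
    simp [wAct, eta, Pi.single_apply, Equiv.symm_apply_eq]

lemma eps_sub_ne_eta_sub {n₁ n₂ : ℕ} {a b : Fin n₁} {c d : Fin n₂} (hab : a ≠ b) :
    (eps a - eps b : L n₁ n₂) ≠ eta c - eta d := by
  intro h
  have h1 := congrFun (congrArg Prod.fst h) a
  simp [eps, eta, Pi.single_apply, hab] at h1

lemma eps_sub_inj {n₁ n₂ : ℕ} {a b c d : Fin n₁} (hab : a ≠ b) (hcd : c ≠ d)
    (h : (eps a - eps b : L n₁ n₂) = eps c - eps d) : a = c ∧ b = d :=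
  epsHat_sub_inj hab hcd (congrArg Prod.fst h)

lemma eta_sub_inj {n₁ n₂ : ℕ} {a b c d : Fin n₂} (hab : a ≠ b) (hcd : c ≠ d)
    (h : (eta a - eta b : L n₁ n₂) = eta c - eta d) : a = c ∧ b = d :=
  epsHat_sub_inj hab hcd (congrArg Prod.snd h)

lemma Phi_doubleSwap {n₁ n₂ : ℕ} {i i₁ i' i'₁ : Fin n₁}
    (hi₁ : (i₁ : ℕ) = (i : ℕ) + 1) (hi'₁ : (i'₁ : ℕ) = (i' : ℕ) + 1)
    (hisep : (i : ℕ) + 2 ≤ (i' : ℕ) ∨ (i' : ℕ) + 2 ≤ (i : ℕ)) :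
    Phi ((Equiv.swap i i₁ * Equiv.swap i' i'₁, 1) : Perm (Fin n₁) × Perm (Fin n₂)) =
      {(eps i₁ - eps i : L n₁ n₂), eps i'₁ - eps i'} := by
  have ne1 : i ≠ i' := Fin.ne_of_val_ne (by omega)
  have ne2 : i ≠ i'₁ := Fin.ne_of_val_ne (by omega)
  have ne3 : i₁ ≠ i' := Fin.ne_of_val_ne (by omega)
  have ne4 : i₁ ≠ i'₁ := Fin.ne_of_val_ne (by omega)
  have ne5 : i ≠ i₁ := Fin.ne_of_val_ne (by omega)
  have ne6 : i' ≠ i'₁ := Fin.ne_of_val_ne (by omega)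
  set σ : Perm (Fin n₁) := Equiv.swap i i₁ * Equiv.swap i' i'₁ with hσ
  have hu := doubleSwap_apply ne1 ne2 ne3 ne4
  have huk : σ i = i₁ := by rw [hσ, hu]; simp
  have huk₁ : σ i₁ = i := by rw [hσ, hu]; simp [Ne.symm ne5]
  have hul : σ i' = i'₁ := by rw [hσ, hu]; simp [Ne.symm ne1, Ne.symm ne3]
  have hul₁ : σ i'₁ = i' := by rw [hσ, hu]; simp [Ne.symm ne2, Ne.symm ne4, Ne.symm ne6]
  ext x
  constructor
  · rintro ⟨⟨y, hy, rfl⟩, z, hz, hzx⟩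
    rcases hz with ⟨a', b', hab', rfl⟩ | ⟨c', d', hcd', rfl⟩
    · -- z is eps-type
      rw [wAct_eps_sub] at hzx
      rcases hy with ⟨a, b, hab, rfl⟩ | ⟨c, d, hcd, rfl⟩
      · rw [neg_sub] at hzx
        have hne' : σ a' ≠ σ b' := fun e => hab'.ne (σ.injective e)
        obtain ⟨h1, h2⟩ := epsHat_sub_inj hne' hab.ne' (congrArg Prod.fst hzx)
        have hP : (a' = i ∧ b' = i₁) ∨ (a' = i' ∧ b' = i'₁) := by
          have e1 : σ a' = _ := hu a'
          have e2 : σ b' = _ := hu b'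
          rw [h1] at e1
          rw [h2] at e2
          have hlt : (a' : ℕ) < b' := hab'
          have hlt2 : (a : ℕ) < b := hab
          split_ifs at e1 e2 <;> omega
        rcases hP with ⟨rfl, rfl⟩ | ⟨rfl, rfl⟩
        · rw [huk] at h1
          rw [huk₁] at h2
          rw [← h1, ← h2, neg_sub]
          exact Or.inl rfl
        · rw [hul] at h1
          rw [hul₁] at h2
          rw [← h1, ← h2, neg_sub]
          exact Or.inr rfl
      · exfalso
        rw [neg_sub] at hzx
        exact eps_sub_ne_eta_sub (fun e => hab'.ne (σ.injective e))
          (hzx.trans rfl : (eps (σ a') - eps (σ b') : L n₁ n₂) = eta d - eta c)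
    · -- z is eta-type: contradiction
      exfalso
      rw [wAct_eta_sub] at hzx
      simp only [Perm.one_apply] at hzx
      rcases hy with ⟨a, b, hab, rfl⟩ | ⟨c, d, hcd, rfl⟩
      · rw [neg_sub] at hzx
        exact eps_sub_ne_eta_sub hab.ne' hzx.symm
      · rw [neg_sub] at hzx
        obtain ⟨h1, h2⟩ := eta_sub_inj hcd'.ne hcd.ne' hzx
        have : (c : ℕ) < d := hcd
        have : (c' : ℕ) < d' := hcd'
        omega
  · rintro (rfl | rfl)
    · exact ⟨⟨eps i - eps i₁, Or.inl ⟨i, i₁, by omega, rfl⟩, by rw [neg_sub]⟩,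
        eps i - eps i₁, Or.inl ⟨i, i₁, by omega, rfl⟩,
        by rw [wAct_eps_sub]; dsimp only; rw [huk, huk₁]⟩
    · exact ⟨⟨eps i' - eps i'₁, Or.inl ⟨i', i'₁, by omega, rfl⟩, by rw [neg_sub]⟩,
        eps i' - eps i'₁, Or.inl ⟨i', i'₁, by omega, rfl⟩,
        by rw [wAct_eps_sub]; dsimp only; rw [hul, hul₁]⟩

end Aux2
/-- Configuration B: two vertical adjacent pairs at positions `k, k+1` and
`k', k'+1` with `|k - k'| ≥ 2`, in rows `i, i+1` and `i', i'+1` with `|i - i'| ≥ 2`; with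
`v⁻¹ = ((i i+1)(i' i'+1), 1)` and `v̂⁻¹ = ŵ (k k+1)(k' k'+1) ŵ₀`, the sets are as
indicated and `ρ` restricts to a bijection between them. -/
theorem config_B (n₁ n₂ : ℕ) (hn₁ : 0 < n₁) (hn₂ : 0 < n₂)
    (ρ : Lhat (n₁ * n₂) →ₗ[ℤ] L n₁ n₂)
    (hρ : ∀ (i : Fin n₁) (j : Fin n₂), ρ (epsHat (lex i j)) = eps i + eta j)
    (wh : Perm (Fin (n₁ * n₂)))
    (k k₁ l l₁ : Fin (n₁ * n₂)) (hk₁ : (k₁ : ℕ) = (k : ℕ) + 1) (hl₁ : (l₁ : ℕ) = (l : ℕ) + 1)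
    (hsep : (k : ℕ) + 2 ≤ (l : ℕ) ∨ (l : ℕ) + 2 ≤ (k : ℕ))
    (i i₁ i' i'₁ : Fin n₁) (hi₁ : (i₁ : ℕ) = (i : ℕ) + 1) (hi'₁ : (i'₁ : ℕ) = (i' : ℕ) + 1)
    (hisep : (i : ℕ) + 2 ≤ (i' : ℕ) ∨ (i' : ℕ) + 2 ≤ (i : ℕ))
    (j j' : Fin n₂)
    (hwk : wh k = lex i j) (hwk₁ : wh k₁ = lex i₁ j)
    (hwl : wh l = lex i' j') (hwl₁ : wh l₁ = lex i'₁ j')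
    (v : Perm (Fin n₁) × Perm (Fin n₂))
    (hv : v⁻¹ = (Equiv.swap i i₁ * Equiv.swap i' i'₁, 1))
    (vh : Perm (Fin (n₁ * n₂)))
    (hvh : vh⁻¹ = wh * Equiv.swap k k₁ * Equiv.swap l l₁ * w0 (n₁ * n₂)) :
    hatAct wh '' PhiHat ((w0 (n₁ * n₂) * (vh * wh))⁻¹) =
      {epsHat (lex i₁ j) - epsHat (lex i j), epsHat (lex i'₁ j') - epsHat (lex i' j')} ∧
    Phi v⁻¹ = {(eps i₁ - eps i : L n₁ n₂), eps i'₁ - eps i'} ∧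
    Set.BijOn (⇑ρ) (hatAct wh '' PhiHat ((w0 (n₁ * n₂) * (vh * wh))⁻¹)) (Phi v⁻¹) := by
  have hperm : (w0 (n₁ * n₂) * (vh * wh))⁻¹ = Equiv.swap k k₁ * Equiv.swap l l₁ := by
    rw [mul_inv_rev, mul_inv_rev, hvh]
    have hw0 : (w0 (n₁ * n₂))⁻¹ = w0 (n₁ * n₂) := by
      apply Equiv.ext
      intro x
      simp [w0, Equiv.Perm.inv_def]
    rw [hw0]
    have hw02 : w0 (n₁ * n₂) * w0 (n₁ * n₂) = 1 := by
      apply Equiv.ext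
      intro x
      simp [w0]
    calc wh⁻¹ * (wh * Equiv.swap k k₁ * Equiv.swap l l₁ * w0 (n₁ * n₂)) * w0 (n₁ * n₂)
        = (wh⁻¹ * wh) * (Equiv.swap k k₁ * Equiv.swap l l₁) * (w0 (n₁ * n₂) * w0 (n₁ * n₂)) := by
          group
      _ = Equiv.swap k k₁ * Equiv.swap l l₁ := by rw [inv_mul_cancel, hw02, one_mul, mul_one]
  rw [hperm, PhiHat_doubleSwap hk₁ hl₁ hsep, hv, Phi_doubleSwap hi₁ hi'₁ hisep,
    Set.image_pair, hatAct_epsHat_sub, hatAct_epsHat_sub, hwk, hwk₁, hwl, hwl₁]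
  have hρ1 : ρ (epsHat (lex i₁ j) - epsHat (lex i j)) = eps i₁ - eps i := by
    rw [map_sub, hρ, hρ]
    abel
  have hρ2 : ρ (epsHat (lex i'₁ j') - epsHat (lex i' j')) = eps i'₁ - eps i' := by
    rw [map_sub, hρ, hρ]
    abel
  have hne : (eps i₁ - eps i : L n₁ n₂) ≠ eps i'₁ - eps i' := by
    intro h
    obtain ⟨h1, h2⟩ := eps_sub_inj (Fin.ne_of_val_ne (by omega))
      (Fin.ne_of_val_ne (by omega)) h
    have := congrArg Fin.val h1
    omega
  refine ⟨rfl, rfl, ?_, ?_, ?_⟩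
  · rintro x (rfl | rfl)
    · rw [hρ1]; exact Or.inl rfl
    · rw [hρ2]; exact Or.inr rfl
  · rintro x (rfl | rfl) y (rfl | rfl) hxy <;>
      first
        | rfl
        | (exfalso; rw [hρ1, hρ2] at hxy; first | exact hne hxy | exact hne hxy.symm)
  · rintro x (rfl | rfl)
    · exact ⟨_, Or.inl rfl, hρ1⟩
    · exact ⟨_, Or.inr rfl, hρ2⟩
end
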